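/- Fix an integer n ≥ 1, an integer l with 0 ≤ l ≤ n−1, and reals λ ∈ (0,1], θ ∈ (0,1). With h = n, let q^{(n,n)}_0, …, q^{(n,n)}_{n−l−1} ∈ ℝ[j,k] be the coefficients of the quotient polynomial Q_{n,n,l}, and for 0 ≤ i ≤ n−l−1 let X_i denote the coefficient of the monomial j^i (i.e., j^i k^0) in q^{(n,n)}_i. Then X_0 = (λθ)^{n−1}(1−θ)^n, and for every 1 ≤ i ≤ n−l−1, X_i = α_i − Σ_{v=0}^{i−1} β_{i−v} X_v, where α_i = (−1)^i Σ_{i_1+i_2+i_3+i_4+i_5 = i} C(2,i_1)C(n,i_2)C(n,i_3)C(n,i_4)C(n,i_5) 2^{i_1} (λθ)^{n−1−i_3}(1−θ)^{n−i_4} θ^{−i_5} and β_a = (−1)^a Σ_{i_1+i_2+i_3 = a} C(1,i_1)C(n,i_2)C(2n+1,i_3) 2^{i_1+i_3} θ^{−i_2}. -/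

import Mathlib

open Polynomial

/-- Rising factorial in a commutative ring: `(a)_m = a (a+1) ⋯ (a+m−1)`, with `(a)_0 = 1`. -/
noncomputable def rfp {S : Type*} [CommRing S] (a : S) (m : ℕ) : S :=
  ∏ i ∈ Finset.range m, (a + (i : S))

/-- The base ring `R = ℝ[j,k]`. -/
abbrev R2 : Type := MvPolynomial (Fin 2) ℝ

/-- The variable `j` as a constant of `R[d]`. -/
noncomputable def Jv : Polynomial R2 := Polynomial.C (MvPolynomial.X 0)

/-- The variable `k` as a constant of `R[d]`. -/
noncomputable def Kv : Polynomial R2 := Polynomial.C (MvPolynomial.X 1)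

/-- Embedding of real scalars into `R[d]`. -/
noncomputable def cst (x : ℝ) : Polynomial R2 := Polynomial.C (MvPolynomial.C x)

/-- The dividend `P_{n,n}` (case `h = n`) in the polynomial long division. -/
noncomputable def Pnn (n : ℕ) (lam th : ℝ) : Polynomial R2 :=
  (X - 2 * Jv - 1) * (X + 2 * (n : Polynomial R2) - 2 * Jv - 1) * rfp (X - Jv) n *
    rfp (cst (1 - th) * X - Jv) n *
    rfp (cst (lam * th) * X - Jv + Kv) n *
    rfp (cst th * X - Jv + Kv) n

/-- The divisor `D_{n,n,l}` (case `h = n`) in the polynomial long division. -/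
noncomputable def Dnnl (n l : ℕ) (lam th : ℝ) : Polynomial R2 :=
  cst (lam * th) * X ^ (l + 1) * (X + (n : Polynomial R2) - 2 * Jv - 1) *
    rfp (cst th * X - Jv) n *
    rfp (X - 2 * Jv - 1 + Kv) (2 * n + 1)

/-- The quantity `α_i^{(n,λ,θ)}`. -/
noncomputable def alphaC (n : ℕ) (lam th : ℝ) (i : ℕ) : ℝ :=
  (-1 : ℝ) ^ i * ∑ x ∈ Finset.Nat.antidiagonalTuple 5 i,
    (Nat.choose 2 (x 0) : ℝ) * (n.choose (x 1) : ℝ) * (n.choose (x 2) : ℝ) *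
      (n.choose (x 3) : ℝ) * (n.choose (x 4) : ℝ) * 2 ^ (x 0) *
      (lam * th) ^ ((n : ℤ) - 1 - (x 2 : ℤ)) * (1 - th) ^ ((n : ℤ) - (x 3 : ℤ)) *
      th ^ (-(x 4 : ℤ))

/-- The quantity `β_a^{(n,θ)}`. -/
noncomputable def betaC (n : ℕ) (th : ℝ) (a : ℕ) : ℝ :=
  (-1 : ℝ) ^ a * ∑ x ∈ Finset.Nat.antidiagonalTuple 3 a,
    (Nat.choose 1 (x 0) : ℝ) * (n.choose (x 1) : ℝ) * ((2 * n + 1).choose (x 2) : ℝ) *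
      2 ^ (x 0 + x 2) * th ^ (-(x 1 : ℤ))

/-!
Substitute `j ↦ t·d`, `k ↦ 0`: a ring map `ℝ[j,k][d] → ℝ[t][d]` sending `j^i d^(N-i)` to
`t^i d^N`, so that `X_0, …, X_(n-l-1)` become the coefficients of the single polynomial `X(t)`,
the coefficient of `d^(n-l-1)` in the image of `Q`. Each linear factor of `P` and `D` has an image
of `d`-degree one, so the top `d`-coefficients `P̃(t)` of the image of `P` (at `d^(4n+2)`) and
`D̃(t)` of the image of `D` (at `d^(3n+l+3)`) are the products of the factors' `d`-coefficients,
and `D̃(0) = λθ^(n+1) ≠ 0`. The remainder contributes to the coefficient of `d^M` only in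
`t`-degrees above `M - (3n+l+3)`. Comparing coefficients of `d^M` for `M > 4n+2` first shows that
the image of `Q` has `d`-degree at most `n-l-1`; at `M = 4n+2` it then gives
`P̃ ≡ D̃ · X mod t^(n-l)`. Expanding `P̃ = λθ^(n+1) Σ α_i t^i` and `D̃ = λθ^(n+1) Σ β_a t^a`
turns this congruence into the recurrence.
-/

open Finset

theorem coeff_prod_fin {S : Type*} [CommSemiring S] {k : ℕ} (f : Fin k → S[X]) (n : ℕ) :
    (∏ x, f x).coeff n = ∑ t ∈ Nat.antidiagonalTuple k n, ∏ x, (f x).coeff (t x) := by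
  classical
  rw [← Polynomial.coeff_coe, ← coeToPowerSeries.ringHom_apply, map_prod,
    PowerSeries.coeff_prod, finsuppAntidiag, sum_map, ← piAntidiag_univ_fin_eq_antidiagonalTuple]
  simp only [coeToPowerSeries.ringHom_apply, Polynomial.coeff_coe]
  exact sum_attach (piAntidiag univ n) fun t => ∏ x, (f x).coeff (t x)

theorem coeff_C_add_C_mul_X_pow {S : Type*} [CommSemiring S] (a b : S) (m t : ℕ) :
    ((C a + C b * X) ^ m).coeff t = m.choose t * a ^ (m - t) * b ^ t := by
  have : (C a + C b * X) ^ m = ((X + C a) ^ m).comp (C b * X) := by simp [add_comm]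
  rw [this, comp_C_mul_X_coeff, coeff_X_add_C_pow]
  ring

theorem choose_mul_pow_sub_eq_zpow {K : Type*} [DivisionRing K] (a : K) (m t : ℕ) :
    (m.choose t : K) * a ^ (m - t) = m.choose t * a ^ ((m : ℤ) - t) := by
  rcases le_or_gt t m with h | h
  · rw [← Nat.cast_sub h, zpow_natCast]
  · simp [Nat.choose_eq_zero_of_lt h]

theorem map_rfp {S T : Type*} [CommRing S] [CommRing T] (f : S →+* T) (a : S) (m : ℕ) :
    f (rfp a m) = rfp (f a) m := by
  simp [rfp]

def HasTopCoeff {S : Type*} [Semiring S] (p : S[X]) (m : ℕ) (c : S) : Prop :=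
  p.natDegree ≤ m ∧ p.coeff m = c

namespace HasTopCoeff

variable {S : Type*} [CommRing S] {p q : S[X]} {m k : ℕ} {a b : S}

theorem mul (hp : HasTopCoeff p m a) (hq : HasTopCoeff q k b) :
    HasTopCoeff (p * q) (m + k) (a * b) :=
  ⟨natDegree_mul_le_of_le hp.1 hq.1, by rw [coeff_mul_add_eq_of_natDegree_le hp.1 hq.1, hp.2, hq.2]⟩

theorem add_natCast (hp : HasTopCoeff p 1 a) (i : ℕ) : HasTopCoeff (p + (i : S[X])) 1 a :=
  ⟨natDegree_add_le_of_degree_le hp.1 (by simp), by simp [hp.2]⟩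

theorem rfp (hp : HasTopCoeff p 1 a) (m : ℕ) : HasTopCoeff (rfp p m) m (a ^ m) := by
  induction m with
  | zero =>
    rw [_root_.rfp, prod_range_zero, pow_zero]
    exact ⟨natDegree_one.le, coeff_one_zero⟩
  | succ m ih =>
    rw [_root_.rfp, prod_range_succ, pow_succ]
    exact ih.mul (hp.add_natCast m)

end HasTopCoeff

section WeightedDivision

variable {S : Type*} [CommRing S] [IsDomain S]

theorem eq_zero_of_X_pow_dvd_mul {c q : S[X]} {t : ℕ} (hc : c.coeff 0 ≠ 0)
    (hq : q.natDegree ≤ t) (h : X ^ (t + 1) ∣ c * q) : q = 0 :=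
  eq_zero_of_dvd_of_natDegree_lt (prime_X.pow_dvd_of_dvd_mul_left _ (by rwa [X_dvd_iff]) h)
    (by rw [natDegree_X_pow]; omega)

variable {P D Q Rm : S[X][X]} {m N : ℕ} {c : S[X]}

theorem natDegree_le_of_eq_mul_add (hP : P.natDegree ≤ m + N) (hD : HasTopCoeff D m c)
    (hc : c.coeff 0 ≠ 0) (hQ : ∀ b, (Q.coeff b).natDegree ≤ b)
    (hRm : ∀ M i, i + m ≤ M → (Rm.coeff M).coeff i = 0) (h : P = D * Q + Rm) :
    Q.natDegree ≤ N := by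
  by_contra! hN
  have htop : c * Q.leadingCoeff = -Rm.coeff (m + Q.natDegree) := by
    have := congrArg (coeff · (m + Q.natDegree)) h
    simp only [coeff_add, coeff_mul_add_eq_of_natDegree_le hD.1 le_rfl, hD.2,
      coeff_eq_zero_of_natDegree_lt (by omega : P.natDegree < m + Q.natDegree)] at this
    exact eq_neg_of_add_eq_zero_left this.symm
  have hQ0 : Q = 0 := leadingCoeff_eq_zero.mp <| eq_zero_of_X_pow_dvd_mul hc (hQ _) <| by
    rw [htop, dvd_neg, X_pow_dvd_iff]
    exact fun i hi => hRm _ _ (by omega)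
  simp [hQ0] at hN

theorem coeff_coeff_eq_of_eq_mul_add {p : S[X]} (hP : HasTopCoeff P (m + N) p)
    (hD : HasTopCoeff D m c) (hc : c.coeff 0 ≠ 0) (hQ : ∀ b, (Q.coeff b).natDegree ≤ b)
    (hRm : ∀ M i, i + m ≤ M → (Rm.coeff M).coeff i = 0) (h : P = D * Q + Rm) {i : ℕ}
    (hi : i ≤ N) : p.coeff i = (c * Q.coeff N).coeff i := by
  have hQN := natDegree_le_of_eq_mul_add hP.1 hD hc hQ hRm h
  have := congrArg (fun f => (f.coeff (m + N)).coeff i) h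
  simpa only [coeff_add, coeff_mul_add_eq_of_natDegree_le hD.1 hQN, hD.2, hP.2,
    hRm _ _ (by omega : i + m ≤ m + N), add_zero] using this

end WeightedDivision

theorem coeff_eq_sub_sum_of_coeff_mul {K : Type*} [Field K] {d x : K[X]} {α β : ℕ → K} {c : K}
    (hc : c ≠ 0) (hd : ∀ a, d.coeff a = c * β a) (hβ : β 0 = 1) {i : ℕ}
    (h : c * α i = (d * x).coeff i) :
    x.coeff i = α i - ∑ v ∈ range i, β (i - v) * x.coeff v := by
  rw [mul_comm d, coeff_mul, Nat.sum_antidiagonal_eq_sum_range_succ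
    (fun v w => x.coeff v * d.coeff w), sum_range_succ, Nat.sub_self, hd 0, hβ] at h
  simp only [hd, mul_left_comm _ c, ← mul_sum, mul_comm (x.coeff _) (β _)] at h
  apply mul_left_cancel₀ hc
  linear_combination -h

-- In `ℝ[X][X]` the inner variable is `t` and the outer one is `d`.
noncomputable def jSubst : R2 →+* ℝ[X][X] :=
  MvPolynomial.eval₂Hom (C.comp C) ![C X * X, 0]

noncomputable def weightHom : R2[X] →+* ℝ[X][X] := eval₂RingHom jSubst X

theorem coeff_jSubst (a : R2) (i : ℕ) :
    (jSubst a).coeff i = C (MvPolynomial.coeff (Finsupp.single 0 i) a) * X ^ i := by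
  induction a using MvPolynomial.induction_on' with
  | monomial u c =>
    rw [jSubst, MvPolynomial.eval₂Hom_monomial, Finsupp.prod_fintype _ _ fun _ => pow_zero _,
      Fin.prod_univ_two, MvPolynomial.coeff_monomial]
    by_cases hu : u 1 = 0
    · obtain ⟨a, rfl⟩ : ∃ a, u = Finsupp.single 0 a := ⟨u 0, by ext x; fin_cases x <;> simp [hu]⟩
      have e : (C (C c) * (C X * X) ^ a : ℝ[X][X]) = C (C c * X ^ a) * X ^ a := by
        simp only [mul_pow, C_mul, C_pow]; ring
      simp only [hu, RingHom.coe_comp, Function.comp_apply, Matrix.cons_val_zero, pow_zero,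
        mul_one, Finsupp.single_eq_same, e, coeff_C_mul_X_pow, (Finsupp.single_injective _).eq_iff]
      by_cases h : i = a
      · simp [h]
      · simp [h, Ne.symm h]
    · have : u ≠ Finsupp.single 0 i := fun h => hu (by simp [h])
      simp [hu, this]
  | add p q hp hq => rw [map_add, coeff_add, hp, hq, MvPolynomial.coeff_add, C_add, add_mul]

theorem coeff_coeff_weightHom (p : R2[X]) (N i : ℕ) :
    ((weightHom p).coeff N).coeff i =
      if i ≤ N then MvPolynomial.coeff (Finsupp.single 0 i) (p.coeff (N - i)) else 0 := by
  induction p using Polynomial.induction_on' with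
  | add p q hp hq => simp only [map_add, coeff_add, hp, hq]; split_ifs <;> simp
  | monomial t a =>
    rw [weightHom, coe_eval₂RingHom, eval₂_monomial, coeff_mul_X_pow', coeff_monomial]
    by_cases ht : t ≤ N
    · by_cases hi : i ≤ N
      · rw [if_pos ht, coeff_jSubst, coeff_C_mul_X_pow, if_pos hi]
        by_cases h : i = N - t
        · rw [if_pos h, if_pos (by omega), h]
        · rw [if_neg h, if_neg (by omega), MvPolynomial.coeff_zero]
      · rw [if_pos ht, coeff_jSubst, coeff_C_mul_X_pow, if_neg hi, if_neg (by omega)]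
    · rw [if_neg ht, coeff_zero]
      split_ifs <;> first | rfl | omega

@[simp] theorem weightHom_X : weightHom X = X := eval₂_X _ _

@[simp] theorem weightHom_Jv : weightHom Jv = C X * X := by
  simp [weightHom, Jv, jSubst]

@[simp] theorem weightHom_Kv : weightHom Kv = 0 := by
  simp [weightHom, Kv, jSubst]

@[simp] theorem weightHom_cst (x : ℝ) : weightHom (cst x) = C (C x) := by
  simp [weightHom, cst, jSubst]

theorem natDegree_coeff_weightHom_le (p : R2[X]) (N : ℕ) :
    ((weightHom p).coeff N).natDegree ≤ N :=
  natDegree_le_iff_coeff_eq_zero.mpr fun i hi => by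
    rw [coeff_coeff_weightHom, if_neg (not_le.mpr hi)]

theorem coeff_coeff_weightHom_eq_zero_of_degree_lt {p : R2[X]} {m M i : ℕ}
    (hp : p.degree < m) (h : i + m ≤ M) : ((weightHom p).coeff M).coeff i = 0 := by
  rw [coeff_coeff_weightHom, if_pos (by omega),
    coeff_eq_zero_of_degree_lt (hp.trans_le (by exact_mod_cast (by omega : m ≤ M - i))),
    MvPolynomial.coeff_zero]

noncomputable def Ptop (n : ℕ) (lam th : ℝ) : ℝ[X] :=
  (1 - 2 * X) * (1 - 2 * X) * (1 - X) ^ n * (C (1 - th) - X) ^ n * (C (lam * th) - X) ^ n *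
    (C th - X) ^ n

noncomputable def Dtop (n : ℕ) (lam th : ℝ) : ℝ[X] :=
  C (lam * th) * (1 - 2 * X) * (C th - X) ^ n * (1 - 2 * X) ^ (2 * n + 1)

theorem hasTopCoeff_weightHom_Pnn (n : ℕ) (lam th : ℝ) :
    HasTopCoeff (weightHom (Pnn n lam th)) (1 + 1 + n + n + n + n) (Ptop n lam th) := by
  rw [Pnn, Ptop]
  simp only [map_mul, map_rfp]
  refine (((((?_ : HasTopCoeff _ 1 _).mul ?_).mul (.rfp ?_ n)).mul (.rfp ?_ n)).mul
    (.rfp ?_ n)).mul (.rfp ?_ n)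
  all_goals
    simp only [map_sub, map_add, map_mul, map_natCast, map_one, map_ofNat weightHom 2, weightHom_X,
      weightHom_Jv, weightHom_Kv, weightHom_cst, add_zero]
    exact ⟨by compute_degree, by simp [coeff_one]⟩

theorem hasTopCoeff_weightHom_Dnnl (n l : ℕ) (lam th : ℝ) :
    HasTopCoeff (weightHom (Dnnl n l lam th)) (0 + (l + 1) + 1 + n + (2 * n + 1))
      (Dtop n lam th) := by
  rw [Dnnl, Dtop, ← mul_one (C (lam * th)), map_mul, map_mul, map_mul, map_mul, map_rfp, map_rfp]
  refine (((((?_ : HasTopCoeff _ 0 _).mul ?_).mul ?_).mul (.rfp ?_ n)).mul (.rfp ?_ _))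
  · rw [weightHom_cst]
    exact ⟨natDegree_C _ |>.le, coeff_C_zero⟩
  · rw [map_pow, weightHom_X]
    exact ⟨natDegree_X_pow_le _, coeff_X_pow_self _⟩
  all_goals
    simp only [map_sub, map_add, map_mul, map_natCast, map_one, map_ofNat weightHom 2, weightHom_X,
      weightHom_Jv, weightHom_Kv, weightHom_cst, add_zero]
    exact ⟨by compute_degree, by simp [coeff_one]⟩

theorem coeff_Ptop {n : ℕ} {lam th : ℝ} (hlt : lam * th ≠ 0) (i : ℕ) :
    (Ptop n lam th).coeff i = lam * th ^ (n + 1) * alphaC n lam th i := by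
  have hth : th ≠ 0 := right_ne_zero_of_mul hlt
  have e : Ptop n lam th = ∏ x : Fin 5, (C (![1, 1, lam * th, 1 - th, th] x) +
      C (![-2, -1, -1, -1, -1] x) * X) ^ (![2, n, n, n, n] x) := by
    simp only [Ptop, Fin.prod_univ_five, Matrix.cons_val, map_neg, map_one, map_sub, map_ofNat C 2]
    ring
  rw [e, coeff_prod_fin, alphaC]
  simp only [mul_sum]
  refine sum_congr rfl fun x hx => ?_
  have hsum : x 0 + x 1 + x 2 + x 3 + x 4 = i := by
    simpa [Fin.sum_univ_five] using Nat.mem_antidiagonalTuple.mp hx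
  simp only [Fin.prod_univ_five, Matrix.cons_val, coeff_C_add_C_mul_X_pow,
    choose_mul_pow_sub_eq_zpow, one_zpow, neg_pow (2 : ℝ)]
  rw [← hsum, show (n : ℤ) - x 2 = (n : ℤ) - 1 - x 2 + 1 by ring, zpow_add_one₀ hlt,
    sub_eq_add_neg (n : ℤ) (x 4), zpow_add₀ hth, zpow_natCast]
  ring

theorem coeff_Dtop {n : ℕ} {lam th : ℝ} (hth : th ≠ 0) (a : ℕ) :
    (Dtop n lam th).coeff a = lam * th ^ (n + 1) * betaC n th a := by
  have e : Dtop n lam th = C (lam * th) * ∏ x : Fin 3, (C (![1, th, 1] x) +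
      C (![-2, -1, -2] x) * X) ^ (![1, n, 2 * n + 1] x) := by
    simp only [Dtop, Fin.prod_univ_three, Matrix.cons_val, map_neg, map_one, map_ofNat C 2]
    ring
  rw [e, coeff_C_mul, coeff_prod_fin, betaC]
  simp only [mul_sum]
  refine sum_congr rfl fun x hx => ?_
  have hsum : x 0 + x 1 + x 2 = a := by
    simpa [Fin.sum_univ_three] using Nat.mem_antidiagonalTuple.mp hx
  simp only [Fin.prod_univ_three, Matrix.cons_val, coeff_C_add_C_mul_X_pow,
    choose_mul_pow_sub_eq_zpow, one_zpow, neg_pow (2 : ℝ)]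
  rw [← hsum, sub_eq_add_neg (n : ℤ) (x 1), zpow_add₀ hth, zpow_natCast]
  ring

theorem betaC_zero (n : ℕ) (th : ℝ) : betaC n th 0 = 1 := by
  simp [betaC, Nat.antidiagonalTuple_zero_right]

theorem alphaC_zero {n : ℕ} (hn : 1 ≤ n) (lam th : ℝ) :
    alphaC n lam th 0 = (lam * th) ^ (n - 1) * (1 - th) ^ n := by
  have h : (n : ℤ) - 1 - (0 : ℕ) = (n - 1 : ℕ) := by omega
  simp only [alphaC, Nat.antidiagonalTuple_zero_right, sum_singleton, Pi.zero_apply, h]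
  simp

theorem coeff_quotient_recurrence {n l : ℕ} (hl : l + 1 ≤ n) {lam th : ℝ} (hlt : lam * th ≠ 0)
    {Q Rem : R2[X]} (hdiv : Pnn n lam th = Dnnl n l lam th * Q + Rem)
    (hRem : Rem.degree < ((3 * n + l + 3 : ℕ) : WithBot ℕ)) {i : ℕ} (hi : i ≤ n - l - 1) :
    MvPolynomial.coeff (Finsupp.single 0 i) (Q.coeff (n - l - 1 - i)) =
      alphaC n lam th i - ∑ v ∈ range i, betaC n th (i - v) *
        MvPolynomial.coeff (Finsupp.single 0 v) (Q.coeff (n - l - 1 - v)) := by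
  have hth : th ≠ 0 := right_ne_zero_of_mul hlt
  have hc : lam * th ^ (n + 1) ≠ 0 := mul_ne_zero (left_ne_zero_of_mul hlt) (pow_ne_zero _ hth)
  have hX : ∀ v ≤ n - l - 1, MvPolynomial.coeff (Finsupp.single 0 v) (Q.coeff (n - l - 1 - v)) =
      ((weightHom Q).coeff (n - l - 1)).coeff v := fun v hv => by
    rw [coeff_coeff_weightHom, if_pos hv]
  have hP : HasTopCoeff (weightHom (Pnn n lam th))
      (0 + (l + 1) + 1 + n + (2 * n + 1) + (n - l - 1)) (Ptop n lam th) := by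
    convert hasTopCoeff_weightHom_Pnn n lam th using 1; omega
  have key := coeff_coeff_eq_of_eq_mul_add hP (hasTopCoeff_weightHom_Dnnl n l lam th)
    (by rw [coeff_Dtop hth, betaC_zero, mul_one]; exact hc) (natDegree_coeff_weightHom_le Q)
    (fun _ _ h => coeff_coeff_weightHom_eq_zero_of_degree_lt hRem (by omega))
    (by rw [hdiv, map_add, map_mul]) hi
  rw [coeff_Ptop hlt] at key
  rw [hX i hi, coeff_eq_sub_sum_of_coeff_mul hc (coeff_Dtop hth) (betaC_zero n th) key]
  refine congrArg _ (sum_congr rfl fun v hv => ?_)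
  rw [hX v (by have := mem_range.mp hv; omega)]

theorem stmt_10_general (n l : ℕ) (hn : 1 ≤ n) (hl : l ≤ n - 1)
    (lam th : ℝ) (hlam0 : 0 < lam) (hth0 : 0 < th)
    (Q Rem : Polynomial R2)
    (hdiv : Pnn n lam th = Dnnl n l lam th * Q + Rem)
    (hRem : Rem.degree < ((3 * n + l + 3 : ℕ) : WithBot ℕ)) :
    MvPolynomial.coeff (Finsupp.single 0 0) (Q.coeff (n - l - 1))
      = (lam * th) ^ (n - 1) * (1 - th) ^ n ∧
    ∀ i : ℕ, 1 ≤ i → i ≤ n - l - 1 →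
      MvPolynomial.coeff (Finsupp.single (0 : Fin 2) i) (Q.coeff (n - l - 1 - i))
        = alphaC n lam th i -
          ∑ v ∈ Finset.range i,
            betaC n th (i - v) *
              MvPolynomial.coeff (Finsupp.single (0 : Fin 2) v) (Q.coeff (n - l - 1 - v)) := by
  have hl' : l + 1 ≤ n := by omega
  have hlt : lam * th ≠ 0 := by positivity
  refine ⟨?_, fun i _ hi => coeff_quotient_recurrence hl' hlt hdiv hRem hi⟩
  simpa [alphaC_zero hn] using coeff_quotient_recurrence hl' hlt hdiv hRem (Nat.zero_le _)

/-- Recurrence for `X_i`, the coefficient of `j^i` in `q^{(n,n)}_i` (case `h = n`):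
`X_0 = (λθ)^{n−1}(1−θ)^n` and `X_i = α_i − ∑_{v=0}^{i−1} β_{i−v} X_v` for `1 ≤ i ≤ n−l−1`. -/
theorem stmt_10 (n l : ℕ) (hn : 1 ≤ n) (hl : l ≤ n - 1)
    (lam th : ℝ) (hlam0 : 0 < lam) (hlam1 : lam ≤ 1) (hth0 : 0 < th) (hth1 : th < 1)
    (Q Rem : Polynomial R2)
    (hdiv : Pnn n lam th = Dnnl n l lam th * Q + Rem)
    (hRem : Rem.degree < ((3 * n + l + 3 : ℕ) : WithBot ℕ)) :
    MvPolynomial.coeff (Finsupp.single 0 0) (Q.coeff (n - l - 1))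
      = (lam * th) ^ (n - 1) * (1 - th) ^ n ∧
    ∀ i : ℕ, 1 ≤ i → i ≤ n - l - 1 →
      MvPolynomial.coeff (Finsupp.single (0 : Fin 2) i) (Q.coeff (n - l - 1 - i))
        = alphaC n lam th i -
          ∑ v ∈ Finset.range i,
            betaC n th (i - v) *
              MvPolynomial.coeff (Finsupp.single (0 : Fin 2) v) (Q.coeff (n - l - 1 - v)) :=
  stmt_10_general n l hn hl lam th hlam0 hth0 Q Rem hdiv hRem
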